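/- arXiv:2107.01042 — 7 statements merged into one kernel-verified Lean document; each statement's English description precedes it below -/
import Mathlib

section
/- Let $p_{(1)} \ge \cdots \ge p_{(n)}$ be fixed probabilities in $[0,1]$, and let $X_{(1)},\dots,X_{(n)}$ be independent Bernoulli random variables with $\Pr[X_{(i)}=1]=p_{(i)}$. For $k \le n-2$ with $k=2\ell+1$, let $q_k = \Pr[\sum_{i=1}^k X_{(i)} > k/2]$ and let $\mathcal{E}_k^j$ denote the event that exactly $j$ of $X_{(1)},\dots,X_{(k)}$ equal $1$. Then $q_{k+2} - q_k = \Pr[\mathcal{E}_k^{\ell}]\cdot p_{(k+1)}p_{(k+2)} - \Pr[\mathcal{E}_k^{\ell+1}]\cdot(1-p_{(k+1)})(1-p_{(k+2)})$. -/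
open Finset

/-!
Both sides are expectations of functions of the number `c` of ones among the first `k`
variables. Conditioning on the two new variables writes `q_{k+2}` as such an expectation too, and
the identity then holds pointwise in `c`: since `k = 2ℓ + 1`, the two new variables can change
the majority only when `c = ℓ` (both equal 1) or `c = ℓ + 1` (both equal 0).
-/

/-- `w p k S` is the probability that, among independent Bernoulli variables
`X_0, …, X_{k-1}` with `Pr[X_i = 1] = p i`, exactly the variables indexed by `S`
equal `1` (and those in `range k \ S` equal `0`). -/
noncomputable def bernWeight (p : ℕ → ℝ) (k : ℕ) (S : Finset ℕ) : ℝ :=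
  (∏ i ∈ S, p i) * ∏ i ∈ (range k) \ S, (1 - p i)

/-- `prExactly p k j` is the probability that exactly `j` of the first `k`
independent Bernoulli variables equal `1`. -/
noncomputable def prExactly (p : ℕ → ℝ) (k j : ℕ) : ℝ :=
  ∑ S ∈ (range k).powerset.filter (fun S => S.card = j), bernWeight p k S

/-- `prMajority p k` is the probability that a strict majority of the first `k`
independent Bernoulli variables equal `1`. -/
noncomputable def prMajority (p : ℕ → ℝ) (k : ℕ) : ℝ :=
  ∑ S ∈ (range k).powerset.filter (fun S => k < 2 * S.card), bernWeight p k S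

/-- The expectation of `f` applied to the number of ones among the first `k` variables. -/
noncomputable def expectCount (p : ℕ → ℝ) (k : ℕ) (f : ℕ → ℝ) : ℝ :=
  ∑ S ∈ (range k).powerset, f S.card * bernWeight p k S

lemma bernWeight_succ_of_subset (p : ℕ → ℝ) {k : ℕ} {T : Finset ℕ} (hT : T ⊆ range k) :
    bernWeight p (k + 1) T = (1 - p k) * bernWeight p k T := by
  have hkT : k ∉ T := fun h => by simpa using hT h
  rw [bernWeight, bernWeight, range_add_one, insert_sdiff_of_notMem _ hkT,
    prod_insert (by simp)]
  ring

lemma bernWeight_succ_insert_of_subset (p : ℕ → ℝ) {k : ℕ} {T : Finset ℕ} (hT : T ⊆ range k) :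
    bernWeight p (k + 1) (insert k T) = p k * bernWeight p k T := by
  have hkT : k ∉ T := fun h => by simpa using hT h
  rw [bernWeight, bernWeight, range_add_one, insert_sdiff_insert,
    sdiff_insert_of_notMem (by simp), prod_insert hkT]
  ring

lemma expectCount_succ (p : ℕ → ℝ) (k : ℕ) (f : ℕ → ℝ) :
    expectCount p (k + 1) f
      = expectCount p k (fun c => (1 - p k) * f c + p k * f (c + 1)) := by
  rw [expectCount, expectCount, range_add_one, sum_powerset_insert (by simp),
    ← sum_add_distrib]
  refine sum_congr rfl fun T hT => ?_
  have hT : T ⊆ range k := mem_powerset.mp hT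
  rw [card_insert_of_notMem (fun h => by simpa using hT h),
    bernWeight_succ_of_subset p hT, bernWeight_succ_insert_of_subset p hT]
  ring

lemma expectCount_sub (p : ℕ → ℝ) (k : ℕ) (f g : ℕ → ℝ) :
    expectCount p k (fun c => f c - g c) = expectCount p k f - expectCount p k g := by
  simp only [expectCount, sub_mul, sum_sub_distrib]

lemma expectCount_mul_const (p : ℕ → ℝ) (k : ℕ) (f : ℕ → ℝ) (a : ℝ) :
    expectCount p k (fun c => f c * a) = expectCount p k f * a := by
  simp only [expectCount, sum_mul, mul_right_comm _ a]

lemma prMajority_eq_expectCount (p : ℕ → ℝ) (k : ℕ) :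
    prMajority p k = expectCount p k (fun c => if k < 2 * c then 1 else 0) := by
  simp only [prMajority, expectCount, sum_filter, boole_mul]

lemma prExactly_eq_expectCount (p : ℕ → ℝ) (k j : ℕ) :
    prExactly p k j = expectCount p k (fun c => if c = j then 1 else 0) := by
  simp only [prExactly, expectCount, sum_filter, boole_mul]

/-- With 0-indexing, the two variables added to the first `k` have parameters `p k` and `p (k + 1)`. -/
theorem stmt0_general (k ℓ : ℕ) (p : ℕ → ℝ)
    (hk : k = 2 * ℓ + 1) :
    prMajority p (k + 2) - prMajority p k
      = prExactly p k ℓ * (p k * p (k + 1))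
        - prExactly p k (ℓ + 1) * ((1 - p k) * (1 - p (k + 1))) := by
  rw [prMajority_eq_expectCount, prMajority_eq_expectCount, expectCount_succ, expectCount_succ,
    ← expectCount_sub, prExactly_eq_expectCount, prExactly_eq_expectCount,
    ← expectCount_mul_const, ← expectCount_mul_const, ← expectCount_sub]
  congr 1
  funext c
  subst hk
  split_ifs <;> first | omega | ring

/-- for sorted probabilities `p 0 ≥ p 1 ≥ ⋯ ≥ p (n-1)` in `[0,1]`
and odd `k = 2ℓ+1` with `k + 2 ≤ n`,
`q_{k+2} - q_k = Pr[𝓔_k^ℓ]·p_{(k+1)}p_{(k+2)} - Pr[𝓔_k^{ℓ+1}]·(1-p_{(k+1)})(1-p_{(k+2)})`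
(with 0-indexing, the two newly added voters have parameters `p k` and `p (k+1)`). -/
theorem stmt0 (n k ℓ : ℕ) (p : ℕ → ℝ)
    (hp : ∀ i, i < n → p i ∈ Set.Icc (0 : ℝ) 1)
    (hsorted : ∀ i j, i ≤ j → j < n → p j ≤ p i)
    (hk : k = 2 * ℓ + 1) (hkn : k + 2 ≤ n) :
    prMajority p (k + 2) - prMajority p k
      = prExactly p k ℓ * (p k * p (k + 1))
        - prExactly p k (ℓ + 1) * ((1 - p k) * (1 - p (k + 1))) :=
  stmt0_general k ℓ p hk
end

section
/- Let $p_{(1)},\dots,p_{(k)} \in (0,1]$ and for $S \subseteq [k]$ define $w(S) = \prod_{i \in S} p_{(i)} \cdot \prod_{i \in [k]\setminus S}(1-p_{(i)})$. Then for any $0 \le j < k$, $\sum_{|S|=j} w(S) = \frac{1}{k-j} \sum_{|S|=j+1} w(S) \sum_{i \in S} \frac{1-p_{(i)}}{p_{(i)}}$, where both sums range over subsets $S$ of $[k]$ of the indicated size. -/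
open Finset

lemma bernWeight_erase (p : ℕ → ℝ) (k : ℕ) (S : Finset ℕ) (hS : S ⊆ range k)
    (i : ℕ) (hi : i ∈ S) (hpi : p i ≠ 0) :
    bernWeight p k S * ((1 - p i) / p i) = bernWeight p k (S.erase i) := by
  unfold bernWeight
  have h1 : ∏ a ∈ S, p a = p i * ∏ a ∈ S.erase i, p a :=
    (Finset.mul_prod_erase S p hi).symm
  have h2 : (range k) \ S.erase i = insert i ((range k) \ S) := by
    ext a
    simp only [Finset.mem_sdiff, Finset.mem_erase, Finset.mem_insert]
    constructor
    · rintro ⟨ha, hna⟩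
      by_cases h : a = i
      · exact Or.inl h
      · exact Or.inr ⟨ha, fun hc => hna ⟨h, hc⟩⟩
    · rintro (rfl | ⟨ha, hna⟩)
      · exact ⟨hS hi, fun hc => hc.1 rfl⟩
      · exact ⟨ha, fun hc => hna hc.2⟩
  have h3 : i ∉ (range k) \ S := fun hc => (Finset.mem_sdiff.mp hc).2 hi
  rw [h1, h2, Finset.prod_insert h3]
  field_simp

/-- for `p i ∈ (0,1]` and `0 ≤ j < k`,
`∑_{|S|=j} w(S) = (1/(k-j)) ∑_{|S|=j+1} w(S) ∑_{i∈S} (1-p_i)/p_i`. -/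
theorem stmt1 (k j : ℕ) (hj : j < k) (p : ℕ → ℝ)
    (hp : ∀ i, i < k → 0 < p i ∧ p i ≤ 1) :
    ∑ S ∈ (range k).powerset.filter (fun S => S.card = j), bernWeight p k S
      = (1 / ((k : ℝ) - j)) *
        ∑ S ∈ (range k).powerset.filter (fun S => S.card = j + 1),
          bernWeight p k S * ∑ i ∈ S, (1 - p i) / p i := by
  have hkj : (0:ℝ) < (k:ℝ) - j := by
    have : (j:ℝ) < k := by exact_mod_cast hj
    linarith
  have key :
      ∑ S ∈ (range k).powerset.filter (fun S => S.card = j + 1),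
          bernWeight p k S * ∑ i ∈ S, (1 - p i) / p i
        = ((k : ℝ) - j) *
          ∑ S ∈ (range k).powerset.filter (fun S => S.card = j), bernWeight p k S := by
    calc
      ∑ S ∈ (range k).powerset.filter (fun S => S.card = j + 1),
          bernWeight p k S * ∑ i ∈ S, (1 - p i) / p i
        = ∑ S ∈ (range k).powerset.filter (fun S => S.card = j + 1),
            ∑ i ∈ S, bernWeight p k (S.erase i) := by
          refine Finset.sum_congr rfl fun S hS => ?_
          simp only [Finset.mem_filter, Finset.mem_powerset] at hS
          rw [Finset.mul_sum]
          refine Finset.sum_congr rfl fun i hi => ?_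
          exact bernWeight_erase p k S hS.1 i hi
            (ne_of_gt (hp i (Finset.mem_range.mp (hS.1 hi))).1)
      _ = ∑ T ∈ (range k).powerset.filter (fun S => S.card = j),
            ∑ i ∈ (range k) \ T, bernWeight p k T := by
          rw [Finset.sum_sigma', Finset.sum_sigma']
          refine Finset.sum_nbij' (fun x => ⟨x.1.erase x.2, x.2⟩)
            (fun x => ⟨insert x.2 x.1, x.2⟩) ?_ ?_ ?_ ?_ ?_
          · rintro ⟨S, i⟩ hx
            simp only [Finset.mem_sigma, Finset.mem_filter, Finset.mem_powerset] at hx ⊢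
            obtain ⟨⟨hS, hcard⟩, hi⟩ := hx
            refine ⟨⟨(Finset.erase_subset i S).trans hS, ?_⟩, ?_⟩
            · rw [Finset.card_erase_of_mem hi, hcard]; rfl
            · exact Finset.mem_sdiff.mpr ⟨hS hi, fun hc => (Finset.mem_erase.mp hc).1 rfl⟩
          · rintro ⟨T, i⟩ hx
            simp only [Finset.mem_sigma, Finset.mem_filter, Finset.mem_powerset,
              Finset.mem_sdiff] at hx ⊢
            obtain ⟨⟨hT, hcard⟩, hik, hiT⟩ := hx
            refine ⟨⟨Finset.insert_subset hik hT, ?_⟩,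
              Finset.mem_insert_self i T⟩
            rw [Finset.card_insert_of_notMem hiT, hcard]
          · rintro ⟨S, i⟩ hx
            simp only [Finset.mem_sigma, Finset.mem_filter, Finset.mem_powerset] at hx
            simp only [Sigma.mk.inj_iff, heq_eq_eq, and_true]
            exact Finset.insert_erase hx.2
          · rintro ⟨T, i⟩ hx
            simp only [Finset.mem_sigma, Finset.mem_filter, Finset.mem_powerset,
              Finset.mem_sdiff] at hx
            simp only [Sigma.mk.inj_iff, heq_eq_eq, and_true]
            exact Finset.erase_insert hx.2.2
          · rintro ⟨S, i⟩ _
            rfl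
      _ = ∑ T ∈ (range k).powerset.filter (fun S => S.card = j),
            ((k : ℝ) - j) * bernWeight p k T := by
          refine Finset.sum_congr rfl fun T hT => ?_
          simp only [Finset.mem_filter, Finset.mem_powerset] at hT
          rw [Finset.sum_const, Finset.card_sdiff_of_subset hT.1, Finset.card_range, hT.2,
            nsmul_eq_mul]
          congr 1
          have : j ≤ k := hj.le
          push_cast [Nat.cast_sub this]
          ring
      _ = ((k : ℝ) - j) *
            ∑ S ∈ (range k).powerset.filter (fun S => S.card = j), bernWeight p k S := by
          rw [Finset.mul_sum]
  rw [key]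
  field_simp
end

section
/- Let $n \ge 1$ and $p_{(i)} = \frac{n+1-i}{n+1}$ for $i \in [n]$, let $k = 2\ell+1$ be odd, let $X_{(i)}$ be independent Bernoulli($p_{(i)}$), and let $\mathcal{E}_k^j$ be the event that exactly $j$ of $X_{(1)},\dots,X_{(k)}$ equal 1. Then $\Pr[\mathcal{E}_k^{\ell}] \ge \frac{k+3}{4n}\cdot \Pr[\mathcal{E}_k^{\ell+1}]$. -/
open Finset

lemma sum_range_card_le (s : Finset ℕ) : ∑ i ∈ range s.card, i ≤ ∑ i ∈ s, i := by
  induction s using Finset.strongInduction with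
  | _ s ih =>
    rcases s.eq_empty_or_nonempty with rfl | hs
    · simp
    · set m := s.max' hs with hm
      have hmem := s.max'_mem hs
      have h1 : s.erase m ⊆ range m := fun x hx =>
        mem_range.2 (lt_of_le_of_ne (s.le_max' _ (mem_of_mem_erase hx)) (ne_of_mem_erase hx))
      have h2 : (s.erase m).card ≤ m := by simpa using card_le_card h1
      have hrec := ih (s.erase m) (erase_ssubset hmem)
      have hc : s.card = (s.erase m).card + 1 := by
        rw [card_erase_of_mem hmem]
        have := card_pos.2 hs
        omega
      rw [hc, Finset.sum_range_succ, ← Finset.sum_erase_add s _ hmem]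
      exact add_le_add hrec h2

/-- with competences `p_(i) = (n+1-i)/(n+1)` (here 0-indexed:
`p i = (n-i)/(n+1)`) and odd `k = 2ℓ+1 ≤ n`,
`Pr[𝓔_k^ℓ] ≥ ((k+3)/(4n)) · Pr[𝓔_k^{ℓ+1}]`. -/
theorem stmt3 (n k ℓ : ℕ) (hn : 1 ≤ n) (p : ℕ → ℝ)
    (hp : ∀ i, i < n → p i = ((n : ℝ) - i) / ((n : ℝ) + 1))
    (hk : k = 2 * ℓ + 1) (hkn : k ≤ n) :
    ((k : ℝ) + 3) / (4 * (n : ℝ)) * prExactly p k (ℓ + 1) ≤ prExactly p k ℓ := by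
  have hn' : (0:ℝ) < n := by exact_mod_cast hn
  have hn1 : (0:ℝ) < (n:ℝ) + 1 := by positivity
  have hpos : ∀ i ∈ range k, 0 < p i := by
    intro i hi
    have hin : i < n := lt_of_lt_of_le (mem_range.1 hi) hkn
    rw [hp i hin]
    have : (i:ℝ) < n := by exact_mod_cast hin
    apply div_pos (by linarith) hn1
  have hle1 : ∀ i ∈ range k, p i ≤ 1 := by
    intro i hi
    have hin : i < n := lt_of_lt_of_le (mem_range.1 hi) hkn
    rw [hp i hin, div_le_one hn1]
    have : (0:ℝ) ≤ i := Nat.cast_nonneg i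
    linarith
  have hone : ∀ i ∈ range k, 1 - p i = ((i:ℝ)+1)/((n:ℝ)+1) := by
    intro i hi
    have hin : i < n := lt_of_lt_of_le (mem_range.1 hi) hkn
    rw [hp i hin]
    field_simp
    ring
  have hWnonneg : ∀ S, S ⊆ range k → 0 ≤ bernWeight p k S := by
    intro S hS
    apply mul_nonneg
    · exact prod_nonneg fun i hi => le_of_lt (hpos i (hS hi))
    · exact prod_nonneg fun i hi => by
        have := hle1 i (mem_sdiff.1 hi).1; linarith
  -- erase formula
  have herase : ∀ S, S ⊆ range k → ∀ i ∈ S,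
      bernWeight p k (S.erase i) = bernWeight p k S * ((1 - p i) / p i) := by
    intro S hS i hi
    have hik : i ∈ range k := hS hi
    have hpi : p i ≠ 0 := ne_of_gt (hpos i hik)
    have hset : (range k) \ (S.erase i) = insert i ((range k) \ S) := by
      ext x
      simp only [mem_sdiff, mem_erase, mem_insert, not_and]
      constructor
      · rintro ⟨hx, h⟩
        by_cases hxi : x = i
        · exact Or.inl hxi
        · exact Or.inr ⟨hx, h hxi⟩
      · rintro (rfl | ⟨hx, hxS⟩)
        · exact ⟨hik, fun h => absurd rfl h⟩
        · exact ⟨hx, fun _ => hxS⟩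
    have hiS : i ∉ (range k) \ S := by simp [hi]
    have hprod : ∏ j ∈ S.erase i, p j = (∏ j ∈ S, p j) / p i := by
      field_simp
      exact Finset.prod_erase_mul S p hi
    rw [bernWeight, bernWeight, hprod, hset, prod_insert hiS]
    field_simp
  -- ratio bound per S
  have hratio : ∀ S, S ⊆ range k → S.card = ℓ + 1 →
      ((ℓ:ℝ)+1)*(((ℓ:ℝ)+2)/(2*n)) ≤ ∑ i ∈ S, (1 - p i) / p i := by
    intro S hS hcard
    have step1 : ∀ i ∈ S, ((i:ℝ)+1)/(n:ℝ) ≤ (1 - p i) / p i := by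
      intro i hi
      have hik : i ∈ range k := hS hi
      have hin : i < n := lt_of_lt_of_le (mem_range.1 hik) hkn
      have hin' : (i:ℝ) < n := by exact_mod_cast hin
      have hX : (1 - p i) / p i = ((i:ℝ)+1)/((n:ℝ)-(i:ℝ)) := by
        rw [hone i hik, hp i hin]
        have h2 : ((n:ℝ)-i) ≠ 0 := by linarith
        have h3 : ((n:ℝ)+1) ≠ 0 := by linarith
        field_simp
      rw [hX]
      apply div_le_div_of_nonneg_left (by positivity) (by linarith) (by linarith)
    have h1 : ∑ i ∈ range (ℓ+1), i ≤ ∑ i ∈ S, i := by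
      have := sum_range_card_le S; rwa [hcard] at this
    have h1R : (∑ i ∈ range (ℓ+1), (i:ℝ)) ≤ ∑ i ∈ S, (i:ℝ) := by
      have := (Nat.cast_le (α := ℝ)).2 h1
      push_cast at this
      exact this
    have hg : (∑ i ∈ range (ℓ+1), i) * 2 = (ℓ+1) * ℓ := by
      simpa using Finset.sum_range_id_mul_two (ℓ+1)
    have hgR : (∑ i ∈ range (ℓ+1), (i:ℝ)) * 2 = ((ℓ:ℝ)+1) * ℓ := by
      have := congrArg (Nat.cast (R := ℝ)) hg
      push_cast at this
      exact this
    have h2R : ∑ i ∈ S, ((i:ℝ)+1) = (∑ i ∈ S, (i:ℝ)) + ((ℓ:ℝ)+1) := by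
      rw [Finset.sum_add_distrib, sum_const, hcard]
      push_cast; ring
    have hbound : ((ℓ:ℝ)+1) * ((ℓ:ℝ)+2) ≤ (∑ i ∈ S, ((i:ℝ)+1)) * 2 := by nlinarith
    calc ((ℓ:ℝ)+1)*(((ℓ:ℝ)+2)/(2*n)) ≤ ∑ i ∈ S, ((i:ℝ)+1)/(n:ℝ) := by
          rw [← sum_div]
          rw [show ((ℓ:ℝ)+1)*(((ℓ:ℝ)+2)/(2*n)) = (((ℓ:ℝ)+1)*((ℓ:ℝ)+2))/(2*n) by ring]
          rw [div_le_div_iff₀ (by positivity) hn']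
          nlinarith
      _ ≤ ∑ i ∈ S, (1 - p i) / p i := sum_le_sum step1
  -- key per-S inequality
  have hkey : ∀ S ∈ (range k).powerset.filter (fun S => S.card = ℓ + 1),
      (((ℓ:ℝ)+1)*(((ℓ:ℝ)+2)/(2*n))) * bernWeight p k S
        ≤ ∑ i ∈ S, bernWeight p k (S.erase i) := by
    intro S hSf
    rw [mem_filter, mem_powerset] at hSf
    obtain ⟨hS, hcard⟩ := hSf
    have : ∑ i ∈ S, bernWeight p k (S.erase i)
        = bernWeight p k S * ∑ i ∈ S, (1 - p i) / p i := by
      rw [mul_sum]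
      exact sum_congr rfl fun i hi => herase S hS i hi
    rw [this, mul_comm]
    exact mul_le_mul_of_nonneg_left (hratio S hS hcard) (hWnonneg S hS)
  -- double sum reindex
  have hswap : ∑ S ∈ (range k).powerset.filter (fun S => S.card = ℓ + 1),
        ∑ i ∈ S, bernWeight p k (S.erase i)
      = ∑ T ∈ (range k).powerset.filter (fun S => S.card = ℓ),
        ∑ i ∈ (range k) \ T, bernWeight p k T := by
    rw [Finset.sum_sigma', Finset.sum_sigma']
    apply Finset.sum_nbij' (fun x => (⟨x.1.erase x.2, x.2⟩ : Σ _ : Finset ℕ, ℕ))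
      (fun y => (⟨insert y.2 y.1, y.2⟩ : Σ _ : Finset ℕ, ℕ))
    · rintro ⟨S, i⟩ hx
      simp only [mem_sigma, mem_filter, mem_powerset] at hx ⊢
      obtain ⟨⟨hS, hcard⟩, hi⟩ := hx
      refine ⟨⟨(erase_subset _ _).trans hS, by rw [card_erase_of_mem hi, hcard]; omega⟩, ?_⟩
      simp [mem_sdiff, hS hi]
    · rintro ⟨T, i⟩ hy
      simp only [mem_sigma, mem_filter, mem_powerset, mem_sdiff] at hy ⊢
      obtain ⟨⟨hT, hcard⟩, hik, hiT⟩ := hy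
      exact ⟨⟨insert_subset hik hT, by rw [card_insert_of_notMem hiT, hcard]⟩, mem_insert_self _ _⟩
    · rintro ⟨S, i⟩ hx
      simp only [mem_sigma, mem_filter, mem_powerset] at hx
      obtain ⟨⟨hS, hcard⟩, hi⟩ := hx
      simp [insert_erase hi]
    · rintro ⟨T, i⟩ hy
      simp only [mem_sigma, mem_filter, mem_powerset, mem_sdiff] at hy
      obtain ⟨⟨hT, hcard⟩, hik, hiT⟩ := hy
      simp [erase_insert hiT]
    · rintro ⟨S, i⟩ hx
      rfl
  -- count of complement
  have hcount : ∀ T ∈ (range k).powerset.filter (fun S => S.card = ℓ),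
      ((range k) \ T).card = ℓ + 1 := by
    intro T hT
    rw [mem_filter, mem_powerset] at hT
    rw [card_sdiff_of_subset hT.1, card_range, hT.2, hk]
    omega
  -- main chain
  have hmain : (((ℓ:ℝ)+1)) * ((((ℓ:ℝ)+2)/(2*n)) * prExactly p k (ℓ+1))
      ≤ ((ℓ:ℝ)+1) * prExactly p k ℓ := by
    have lhs_eq : (((ℓ:ℝ)+1)) * ((((ℓ:ℝ)+2)/(2*n)) * prExactly p k (ℓ+1))
        = ∑ S ∈ (range k).powerset.filter (fun S => S.card = ℓ + 1),
            (((ℓ:ℝ)+1)*(((ℓ:ℝ)+2)/(2*n))) * bernWeight p k S := by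
      rw [prExactly, mul_sum, mul_sum]
      exact sum_congr rfl fun S _ => by ring
    have rhs_eq : ((ℓ:ℝ)+1) * prExactly p k ℓ
        = ∑ T ∈ (range k).powerset.filter (fun S => S.card = ℓ),
            ∑ i ∈ (range k) \ T, bernWeight p k T := by
      rw [prExactly, mul_sum]
      refine sum_congr rfl fun T hT => ?_
      rw [sum_const, hcount T hT, nsmul_eq_mul]
      push_cast; ring
    rw [lhs_eq, rhs_eq, ← hswap]
    exact sum_le_sum hkey
  have hl1 : (0:ℝ) < (ℓ:ℝ) + 1 := by positivity
  have := (mul_le_mul_iff_of_pos_left hl1).1 hmain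
  have hcoef : ((k : ℝ) + 3) / (4 * (n : ℝ)) = ((ℓ:ℝ)+2)/(2*n) := by
    subst hk
    push_cast
    rw [div_eq_div_iff (by positivity) (by positivity)]
    ring
  rw [hcoef]
  linarith [this]
end

section
/- Let $n \ge 1$ and $p_{(i)} = \frac{n+1-i}{n+1}$, let $k = 2\ell+1 \le n$ be odd, let $X_{(i)}$ be independent Bernoulli($p_{(i)}$), and let $\mathcal{E}_k^j$ be the event that exactly $j$ of $X_{(1)},\dots,X_{(k)}$ equal 1. Then $\Pr[\mathcal{E}_k^{\ell}] \le \frac{k}{n+1-k}\cdot \Pr[\mathcal{E}_k^{\ell+1}]$. -/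
open Finset

lemma bernWeight_insert (p : ℕ → ℝ) (k : ℕ) (S : Finset ℕ) (i : ℕ)
    (hi : i ∈ range k \ S) :
    (1 - p i) * bernWeight p k (insert i S) = p i * bernWeight p k S := by
  obtain ⟨hik, hiS⟩ := Finset.mem_sdiff.mp hi
  have h1 : range k \ insert i S = (range k \ S).erase i := by
    rw [Finset.sdiff_insert]
  have h2 : insert i ((range k \ S).erase i) = range k \ S :=
    Finset.insert_erase hi
  rw [bernWeight, bernWeight, Finset.prod_insert hiS, h1]
  have h3 : ∏ j ∈ range k \ S, (1 - p j)
      = (1 - p i) * ∏ j ∈ (range k \ S).erase i, (1 - p j) := by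
    rw [← h2, Finset.prod_insert (Finset.notMem_erase i _)]
    rw [h2]
  rw [h3]; ring

lemma bernWeight_nonneg (n k : ℕ) (p : ℕ → ℝ)
    (hp : ∀ i, i < n → p i = ((n : ℝ) - i) / ((n : ℝ) + 1)) (hkn : k ≤ n)
    (S : Finset ℕ) (hS : S ⊆ range k) : 0 ≤ bernWeight p k S := by
  have hn1 : (0:ℝ) < (n:ℝ) + 1 := by positivity
  apply mul_nonneg
  · apply Finset.prod_nonneg
    intro i hi
    have hik : i < k := mem_range.mp (hS hi)
    have hin : i < n := lt_of_lt_of_le hik hkn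
    rw [hp i hin]
    have : (i:ℝ) < n := by exact_mod_cast hin
    apply div_nonneg _ hn1.le
    linarith
  · apply Finset.prod_nonneg
    intro i hi
    have hik : i < k := mem_range.mp (Finset.mem_sdiff.mp hi).1
    have hin : i < n := lt_of_lt_of_le hik hkn
    rw [hp i hin]
    have : (i:ℝ) < n := by exact_mod_cast hin
    rw [sub_nonneg, div_le_one hn1]
    linarith

/-- with competences `p_(i) = (n+1-i)/(n+1)` (here 0-indexed:
`p i = (n-i)/(n+1)`) and odd `k = 2ℓ+1 ≤ n`,
`Pr[𝓔_k^ℓ] ≤ (k/(n+1-k)) · Pr[𝓔_k^{ℓ+1}]`. -/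
theorem stmt4 (n k ℓ : ℕ) (hn : 1 ≤ n) (p : ℕ → ℝ)
    (hp : ∀ i, i < n → p i = ((n : ℝ) - i) / ((n : ℝ) + 1))
    (hk : k = 2 * ℓ + 1) (hkn : k ≤ n) :
    prExactly p k ℓ ≤ (k : ℝ) / ((n : ℝ) + 1 - k) * prExactly p k (ℓ + 1) := by
  have hkr : (k:ℝ) ≤ n := by exact_mod_cast hkn
  have hpos : (0:ℝ) < (n:ℝ) + 1 - k := by linarith
  set A := (range k).powerset.filter (fun S => S.card = ℓ) with hA
  set B := (range k).powerset.filter (fun S => S.card = ℓ + 1) with hB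
  -- key pointwise inequality
  have key : ∀ S ∈ A, ∀ i ∈ range k \ S,
      ((n:ℝ) + 1 - k) * bernWeight p k S ≤ k * bernWeight p k (insert i S) := by
    intro S hS i hi
    obtain ⟨hSsub, _⟩ := Finset.mem_filter.mp hS
    have hSsub : S ⊆ range k := Finset.mem_powerset.mp hSsub
    obtain ⟨hik, hiS⟩ := Finset.mem_sdiff.mp hi
    have hikn : i < k := mem_range.mp hik
    have hin : i < n := lt_of_lt_of_le hikn hkn
    have hwS : 0 ≤ bernWeight p k S := bernWeight_nonneg n k p hp hkn S hSsub
    have hwT : 0 ≤ bernWeight p k (insert i S) := by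
      apply bernWeight_nonneg n k p hp hkn
      exact Finset.insert_subset hik hSsub
    have heq := bernWeight_insert p k S i hi
    rw [hp i hin] at heq
    have hn1 : ((n:ℝ) + 1) ≠ 0 := by positivity
    have hir : (i:ℝ) < n := by exact_mod_cast hin
    have hikr : (i:ℝ) + 1 ≤ k := by exact_mod_cast hikn
    have heq2 : ((n:ℝ) - i) * bernWeight p k S
        = ((i:ℝ) + 1) * bernWeight p k (insert i S) := by
      field_simp at heq
      linear_combination -heq
    have h1 : ((n:ℝ) + 1 - k) * bernWeight p k S ≤ ((n:ℝ) - i) * bernWeight p k S := by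
      apply mul_le_mul_of_nonneg_right _ hwS
      linarith
    have h2 : ((i:ℝ) + 1) * bernWeight p k (insert i S)
        ≤ (k:ℝ) * bernWeight p k (insert i S) :=
      mul_le_mul_of_nonneg_right hikr hwT
    linarith
  -- double counting bijection
  have hbij : ∑ S ∈ A, ∑ i ∈ range k \ S, ((k:ℝ) * bernWeight p k (insert i S))
      = ∑ T ∈ B, ∑ i ∈ T, ((k:ℝ) * bernWeight p k T) := by
    rw [Finset.sum_sigma', Finset.sum_sigma']
    apply Finset.sum_nbij' (i := fun x => (⟨insert x.2 x.1, x.2⟩ : Σ _ : Finset ℕ, ℕ))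
      (j := fun x => (⟨x.1.erase x.2, x.2⟩ : Σ _ : Finset ℕ, ℕ))
    · rintro ⟨S, i⟩ hSi
      rw [Finset.mem_sigma] at hSi
      obtain ⟨hSA, hi⟩ := hSi
      rw [hA, Finset.mem_filter, Finset.mem_powerset] at hSA
      obtain ⟨hsub, hcard⟩ := hSA
      obtain ⟨hik, hiS⟩ := Finset.mem_sdiff.mp hi
      refine Finset.mem_sigma.mpr ⟨?_, Finset.mem_insert_self _ _⟩
      rw [hB, Finset.mem_filter, Finset.mem_powerset]
      exact ⟨Finset.insert_subset hik hsub,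
        by rw [Finset.card_insert_of_notMem hiS, hcard]⟩
    · rintro ⟨T, i⟩ hTi
      rw [Finset.mem_sigma] at hTi
      obtain ⟨hTB, hi⟩ := hTi
      rw [hB, Finset.mem_filter, Finset.mem_powerset] at hTB
      obtain ⟨hsub, hcard⟩ := hTB
      refine Finset.mem_sigma.mpr ⟨?_, ?_⟩
      · rw [hA, Finset.mem_filter, Finset.mem_powerset]
        refine ⟨(Finset.erase_subset _ _).trans hsub, ?_⟩
        rw [Finset.card_erase_of_mem hi, hcard]
        omega
      · exact Finset.mem_sdiff.mpr ⟨hsub hi, Finset.notMem_erase i T⟩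
    · rintro ⟨S, i⟩ hSi
      rw [Finset.mem_sigma] at hSi
      obtain ⟨_, hi⟩ := hSi
      obtain ⟨_, hiS⟩ := Finset.mem_sdiff.mp hi
      simp [Finset.erase_insert hiS]
    · rintro ⟨T, i⟩ hTi
      rw [Finset.mem_sigma] at hTi
      obtain ⟨_, hi⟩ := hTi
      simp [Finset.insert_erase hi]
    · rintro ⟨S, i⟩ _
      rfl
  -- cardinality of complement
  have hcard' : ∀ S ∈ A, (range k \ S).card = ℓ + 1 := by
    intro S hS
    rw [hA, Finset.mem_filter, Finset.mem_powerset] at hS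
    rw [Finset.card_sdiff_of_subset hS.1, Finset.card_range, hS.2]
    omega
  -- assemble
  have h5 : ∑ S ∈ A, ∑ _i ∈ range k \ S, (((n:ℝ)+1-(k:ℝ)) * bernWeight p k S)
      = ((ℓ:ℝ)+1) * (((n:ℝ)+1-(k:ℝ)) * prExactly p k ℓ) := by
    rw [prExactly, ← hA, Finset.mul_sum, Finset.mul_sum]
    apply Finset.sum_congr rfl
    intro S hS
    rw [Finset.sum_const, hcard' S hS, nsmul_eq_mul]
    push_cast; ring
  have h6 : ∑ T ∈ B, ∑ _i ∈ T, ((k:ℝ) * bernWeight p k T)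
      = ((ℓ:ℝ)+1) * ((k:ℝ) * prExactly p k (ℓ+1)) := by
    rw [prExactly, ← hB, Finset.mul_sum, Finset.mul_sum]
    apply Finset.sum_congr rfl
    intro T hT
    have hTc : T.card = ℓ + 1 := (Finset.mem_filter.mp hT).2
    rw [Finset.sum_const, hTc, nsmul_eq_mul]
    push_cast; ring
  have hmain : ((ℓ:ℝ)+1) * (((n:ℝ)+1-(k:ℝ)) * prExactly p k ℓ)
      ≤ ((ℓ:ℝ)+1) * ((k:ℝ) * prExactly p k (ℓ+1)) := by
    rw [← h5, ← h6, ← hbij]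
    apply Finset.sum_le_sum
    intro S hS
    apply Finset.sum_le_sum
    intro i hi
    exact key S hS i hi
  have hl1 : (0:ℝ) < (ℓ:ℝ) + 1 := by positivity
  have hmain2 : ((n:ℝ)+1-(k:ℝ)) * prExactly p k ℓ ≤ (k:ℝ) * prExactly p k (ℓ+1) :=
    le_of_mul_le_mul_left hmain hl1
  rw [div_mul_eq_mul_div, le_div_iff₀ hpos]
  linarith
end

section
/- Suppose $p_{(1)} \ge \cdots \ge p_{(n)}$ with all $p_{(i)} \le H$ for some $H \in (0,1)$, and all $p_{(i)} > 0$. Let $k = 2\ell+1 \le n$, let $X_{(i)}$ be independent Bernoulli($p_{(i)}$), and let $\mathcal{E}_k^j$ be the event that exactly $j$ of $X_{(1)},\dots,X_{(k)}$ equal 1. Then $\Pr[\mathcal{E}_k^{\ell+1}] \le \frac{H}{1-H}\cdot \Pr[\mathcal{E}_k^{\ell}]$. -/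
open Finset

lemma bern_erase_key (p : ℕ → ℝ) (k : ℕ) (H : ℝ) (hH0 : 0 < H) (hH1 : H < 1)
    (hpos : ∀ i, i < k → 0 < p i) (hub : ∀ i, i < k → p i ≤ H)
    (S : Finset ℕ) (hS : S ⊆ range k) (i : ℕ) (hi : i ∈ S) :
    bernWeight p k S ≤ H / (1 - H) * bernWeight p k (S.erase i) := by
  have hik : i < k := mem_range.mp (hS hi)
  have hinotin : i ∉ range k \ S := by simp [hi]
  have hset : range k \ S.erase i = insert i (range k \ S) := by
    ext j
    simp only [mem_sdiff, mem_erase, mem_insert, mem_range]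
    by_cases hji : j = i
    · subst hji; simp [hik, hi]
    · tauto
  have h1 : bernWeight p k (S.erase i) =
      (1 - p i) * ((∏ j ∈ S.erase i, p j) * ∏ j ∈ range k \ S, (1 - p j)) := by
    rw [bernWeight, hset, prod_insert hinotin]; ring
  have h2 : bernWeight p k S =
      p i * ((∏ j ∈ S.erase i, p j) * ∏ j ∈ range k \ S, (1 - p j)) := by
    rw [bernWeight, ← mul_prod_erase S p hi]; ring
  set A := (∏ j ∈ S.erase i, p j) * ∏ j ∈ range k \ S, (1 - p j) with hA
  have hA0 : 0 ≤ A := by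
    apply mul_nonneg
    · exact prod_nonneg fun j hj =>
        (hpos j (mem_range.mp (hS (mem_of_mem_erase hj)))).le
    · refine prod_nonneg fun j hj => ?_
      have := hub j (mem_range.mp (mem_sdiff.mp hj).1)
      linarith
  rw [h1, h2]
  have hpi := hub i hik
  have hpi0 := hpos i hik
  have h1H : 0 < 1 - H := by linarith
  rw [div_mul_eq_mul_div, le_div_iff₀ h1H]
  nlinarith [mul_nonneg hA0 (show (0:ℝ) ≤ H - p i by linarith)]

/-- if `0 < p_(i) ≤ H < 1` (sorted decreasingly) and `k = 2ℓ+1 ≤ n`,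
then `Pr[𝓔_k^{ℓ+1}] ≤ (H/(1-H)) · Pr[𝓔_k^ℓ]`. -/
theorem stmt7 (n k ℓ : ℕ) (H : ℝ) (hH : 0 < H ∧ H < 1) (p : ℕ → ℝ)
    (hsorted : ∀ i j, i ≤ j → j < n → p j ≤ p i)
    (hpos : ∀ i, i < n → 0 < p i) (hub : ∀ i, i < n → p i ≤ H)
    (hk : k = 2 * ℓ + 1) (hkn : k ≤ n) :
    prExactly p k (ℓ + 1) ≤ H / (1 - H) * prExactly p k ℓ := by
  obtain ⟨hH0, hH1⟩ := hH
  have hpos' : ∀ i, i < k → 0 < p i := fun i hi => hpos i (lt_of_lt_of_le hi hkn)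
  have hub' : ∀ i, i < k → p i ≤ H := fun i hi => hub i (lt_of_lt_of_le hi hkn)
  set A := (range k).powerset.filter (fun S => S.card = ℓ + 1) with hAdef
  set B := (range k).powerset.filter (fun S => S.card = ℓ) with hBdef
  have e1 : (ℓ + 1 : ℝ) * prExactly p k (ℓ+1) = ∑ S ∈ A, ∑ _i ∈ S, bernWeight p k S := by
    rw [prExactly, mul_sum]
    refine sum_congr rfl fun S hS => ?_
    rw [sum_const, (mem_filter.mp hS).2]
    push_cast; ring
  have e2 : ∑ S ∈ A, ∑ i ∈ S, bernWeight p k S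
      ≤ H / (1 - H) * ∑ S ∈ A, ∑ i ∈ S, bernWeight p k (S.erase i) := by
    rw [mul_sum]
    refine sum_le_sum fun S hS => ?_
    rw [mul_sum]
    refine sum_le_sum fun i hi => ?_
    exact bern_erase_key p k H hH0 hH1 hpos' hub' S
      (mem_powerset.mp (mem_filter.mp hS).1) i hi
  have e3 : ∑ S ∈ A, ∑ i ∈ S, bernWeight p k (S.erase i)
      = ∑ T ∈ B, ∑ _i ∈ (range k) \ T, bernWeight p k T := by
    rw [sum_sigma', sum_sigma']
    refine sum_nbij' (i := fun x => ⟨x.1.erase x.2, x.2⟩)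
      (j := fun y => ⟨insert y.2 y.1, y.2⟩) ?_ ?_ ?_ ?_ ?_
    · rintro ⟨S, i⟩ hx
      simp only [mem_sigma, hAdef, mem_filter, mem_powerset] at hx
      obtain ⟨⟨hsub, hcard⟩, hmem⟩ := hx
      simp only [mem_sigma, hBdef, mem_filter, mem_powerset, mem_sdiff]
      refine ⟨⟨(erase_subset _ _).trans hsub, ?_⟩, hsub hmem, notMem_erase _ _⟩
      rw [card_erase_of_mem hmem, hcard]; omega
    · rintro ⟨T, i⟩ hy
      simp only [mem_sigma, hBdef, mem_filter, mem_powerset, mem_sdiff] at hy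
      obtain ⟨⟨hsub, hcard⟩, hik, hnotin⟩ := hy
      simp only [mem_sigma, hAdef, mem_filter, mem_powerset]
      refine ⟨⟨insert_subset hik hsub, ?_⟩, mem_insert_self _ _⟩
      rw [card_insert_of_notMem hnotin, hcard]
    · rintro ⟨S, i⟩ hx
      simp only [mem_sigma] at hx
      simp [insert_erase hx.2]
    · rintro ⟨T, i⟩ hy
      simp only [mem_sigma, hBdef, mem_filter, mem_powerset, mem_sdiff] at hy
      simp [erase_insert hy.2.2]
    · rintro ⟨S, i⟩ _
      rfl
  have e4 : ∑ T ∈ B, ∑ _i ∈ (range k) \ T, bernWeight p k T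
      = (ℓ + 1 : ℝ) * prExactly p k ℓ := by
    rw [prExactly, mul_sum]
    refine sum_congr rfl fun T hT => ?_
    obtain ⟨hsub, hcard⟩ := mem_filter.mp hT
    rw [sum_const, card_sdiff_of_subset (mem_powerset.mp hsub), card_range, hcard, hk]
    have : 2 * ℓ + 1 - ℓ = ℓ + 1 := by omega
    rw [this]
    push_cast; ring
  have main : (ℓ + 1 : ℝ) * prExactly p k (ℓ+1)
      ≤ (ℓ + 1 : ℝ) * (H / (1 - H) * prExactly p k ℓ) := by
    rw [e1]
    calc ∑ S ∈ A, ∑ i ∈ S, bernWeight p k S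
        ≤ H / (1 - H) * ∑ S ∈ A, ∑ i ∈ S, bernWeight p k (S.erase i) := e2
      _ = H / (1 - H) * ((ℓ + 1 : ℝ) * prExactly p k ℓ) := by rw [e3, e4]
      _ = (ℓ + 1 : ℝ) * (H / (1 - H) * prExactly p k ℓ) := by ring
  have hl : (0:ℝ) < ℓ + 1 := by positivity
  exact le_of_mul_le_mul_left main hl
end

section
/- Suppose $p_{(1)} \ge \cdots \ge p_{(n)}$ with all $p_{(i)} \ge L$ for some $L \in (0,1)$. Let $k = 2\ell+1 \le n$, let $X_{(i)}$ be independent Bernoulli($p_{(i)}$), and let $\mathcal{E}_k^j$ be the event that exactly $j$ of $X_{(1)},\dots,X_{(k)}$ equal 1. Then $\Pr[\mathcal{E}_k^{\ell+1}] \ge \frac{L}{1-L}\cdot \Pr[\mathcal{E}_k^{\ell}]$. -/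
open Finset

/-- if `L ≤ p_(i) ≤ 1` with `0 < L < 1` (sorted decreasingly)
and `k = 2ℓ+1 ≤ n`, then `Pr[𝓔_k^{ℓ+1}] ≥ (L/(1-L)) · Pr[𝓔_k^ℓ]`. -/
theorem stmt8 (n k ℓ : ℕ) (L : ℝ) (hL : 0 < L ∧ L < 1) (p : ℕ → ℝ)
    (hsorted : ∀ i j, i ≤ j → j < n → p j ≤ p i)
    (hlb : ∀ i, i < n → L ≤ p i) (hub : ∀ i, i < n → p i ≤ 1)
    (hk : k = 2 * ℓ + 1) (hkn : k ≤ n) :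
    L / (1 - L) * prExactly p k ℓ ≤ prExactly p k (ℓ + 1) := by
  obtain ⟨hL0, hL1⟩ := hL
  have h1L : (0:ℝ) < 1 - L := by linarith
  set A := (range k).powerset.filter (fun S => S.card = ℓ) with hA
  set B := (range k).powerset.filter (fun S => S.card = ℓ + 1) with hB
  have hp0 : ∀ i, i < n → 0 ≤ p i := fun i hi => le_trans hL0.le (hlb i hi)
  have hw0 : ∀ S : Finset ℕ, S ⊆ range k → 0 ≤ bernWeight p k S := by
    intro S hS
    apply mul_nonneg
    · exact prod_nonneg fun i hi => hp0 i (lt_of_lt_of_le (mem_range.1 (hS hi)) hkn)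
    · refine prod_nonneg fun i hi => ?_
      have hin : i < n := lt_of_lt_of_le (mem_range.1 (mem_sdiff.1 hi).1) hkn
      linarith [hub i hin]
  -- pointwise inequality
  have hstep : ∀ S ∈ A, ∀ i ∈ range k \ S,
      L / (1 - L) * bernWeight p k S ≤ bernWeight p k (insert i S) := by
    intro S hS i hi
    have hSsub : S ⊆ range k := mem_powerset.1 (mem_filter.1 hS).1
    obtain ⟨hik, hiS⟩ := mem_sdiff.1 hi
    have hin : i < n := lt_of_lt_of_le (mem_range.1 hik) hkn
    have hrel : bernWeight p k (insert i S) * (1 - p i) = p i * bernWeight p k S := by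
      unfold bernWeight
      rw [prod_insert hiS]
      have hset : (range k) \ insert i S = ((range k) \ S).erase i := by
        ext j
        simp only [mem_sdiff, mem_erase, mem_insert]
        tauto
      rw [hset]
      have he : ∏ j ∈ (range k) \ S, (1 - p j)
          = (1 - p i) * ∏ j ∈ ((range k) \ S).erase i, (1 - p j) :=
        (Finset.mul_prod_erase _ _ hi).symm
      rw [he]; ring
    have hwS : 0 ≤ bernWeight p k S := hw0 S hSsub
    have hwT : 0 ≤ bernWeight p k (insert i S) :=
      hw0 _ (insert_subset hik hSsub)
    rw [div_mul_eq_mul_div, div_le_iff₀ h1L]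
    have h1 : L * bernWeight p k S ≤ p i * bernWeight p k S :=
      mul_le_mul_of_nonneg_right (hlb i hin) hwS
    have h2 : bernWeight p k (insert i S) * (1 - p i)
        ≤ bernWeight p k (insert i S) * (1 - L) :=
      mul_le_mul_of_nonneg_left (by linarith [hlb i hin]) hwT
    linarith
  -- double counting
  have hdouble : ∑ S ∈ A, ∑ i ∈ range k \ S, bernWeight p k (insert i S)
      = ∑ T ∈ B, ∑ i ∈ T, bernWeight p k T := by
    rw [Finset.sum_sigma', Finset.sum_sigma']
    refine Finset.sum_nbij' (fun x => ⟨insert x.2 x.1, x.2⟩)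
      (fun x => ⟨x.1.erase x.2, x.2⟩) ?_ ?_ ?_ ?_ ?_
    · rintro ⟨S, i⟩ hx
      simp only [mem_sigma] at hx ⊢
      obtain ⟨hS, hi⟩ := hx
      obtain ⟨hSsub, hScard⟩ := mem_filter.1 hS
      rw [mem_powerset] at hSsub
      obtain ⟨hik, hiS⟩ := mem_sdiff.1 hi
      refine ⟨mem_filter.2 ⟨mem_powerset.2 (insert_subset hik hSsub), ?_⟩, mem_insert_self _ _⟩
      rw [card_insert_of_notMem hiS, hScard]
    · rintro ⟨T, i⟩ hx
      simp only [mem_sigma] at hx ⊢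
      obtain ⟨hT, hi⟩ := hx
      obtain ⟨hTsub, hTcard⟩ := mem_filter.1 hT
      rw [mem_powerset] at hTsub
      refine ⟨mem_filter.2 ⟨mem_powerset.2 ((erase_subset _ _).trans hTsub), ?_⟩, ?_⟩
      · rw [card_erase_of_mem hi, hTcard]; omega
      · exact mem_sdiff.2 ⟨hTsub hi, notMem_erase _ _⟩
    · rintro ⟨S, i⟩ hx
      simp only [mem_sigma] at hx
      have hiS : i ∉ S := (mem_sdiff.1 hx.2).2
      simp [erase_insert hiS]
    · rintro ⟨T, i⟩ hx
      simp only [mem_sigma] at hx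
      simp [insert_erase hx.2]
    · rintro ⟨S, i⟩ _; rfl
  -- evaluate both nested sums
  have hcardA : ∀ S ∈ A, (range k \ S).card = ℓ + 1 := by
    intro S hS
    obtain ⟨hSsub, hScard⟩ := mem_filter.1 hS
    rw [mem_powerset] at hSsub
    rw [card_sdiff_of_subset hSsub, card_range, hScard, hk]
    omega
  have hRHS : ∑ T ∈ B, ∑ i ∈ T, bernWeight p k T = (ℓ + 1 : ℝ) * prExactly p k (ℓ + 1) :=
    calc ∑ T ∈ B, ∑ i ∈ T, bernWeight p k T
        = ∑ T ∈ B, (ℓ + 1 : ℝ) * bernWeight p k T := by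
          refine Finset.sum_congr rfl fun T hT => ?_
          rw [Finset.sum_const, (mem_filter.1 hT).2, nsmul_eq_mul]
          push_cast; ring
      _ = (ℓ + 1 : ℝ) * ∑ T ∈ B, bernWeight p k T := by rw [Finset.mul_sum]
      _ = (ℓ + 1 : ℝ) * prExactly p k (ℓ + 1) := by rw [prExactly, hB]
  have hLHS : ∑ S ∈ A, ∑ i ∈ range k \ S, (L / (1 - L) * bernWeight p k S)
      = (ℓ + 1 : ℝ) * (L / (1 - L) * prExactly p k ℓ) :=
    calc ∑ S ∈ A, ∑ i ∈ range k \ S, (L / (1 - L) * bernWeight p k S)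
        = ∑ S ∈ A, (ℓ + 1 : ℝ) * (L / (1 - L) * bernWeight p k S) := by
          refine Finset.sum_congr rfl fun S hS => ?_
          rw [Finset.sum_const, hcardA S hS, nsmul_eq_mul]
          push_cast; ring
      _ = (ℓ + 1 : ℝ) * ∑ S ∈ A, (L / (1 - L) * bernWeight p k S) := by rw [Finset.mul_sum]
      _ = (ℓ + 1 : ℝ) * (L / (1 - L) * prExactly p k ℓ) := by
          rw [prExactly, hA, Finset.mul_sum, Finset.mul_sum]; rw [← Finset.mul_sum]
  have hineq : ∑ S ∈ A, ∑ i ∈ range k \ S, (L / (1 - L) * bernWeight p k S)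
      ≤ ∑ S ∈ A, ∑ i ∈ range k \ S, bernWeight p k (insert i S) :=
    Finset.sum_le_sum fun S hS => Finset.sum_le_sum fun i hi => hstep S hS i hi
  rw [hLHS, hdouble, hRHS] at hineq
  have hpos : (0:ℝ) < (ℓ + 1 : ℝ) := by positivity
  exact le_of_mul_le_mul_left hineq hpos
end

section
/- For every positive integer $n$, $\frac{n!\,n!}{(2n)!} \ge \frac{\sqrt{\pi n}}{4^n}$, and $\frac{n!\,n!}{(2n)!} \le \frac{\sqrt{\pi n}}{4^n(1 - 1/(8n))} \le \frac{3}{2}\cdot\frac{\sqrt{\pi n}}{4^n}$. -/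
open Real Filter Nat Topology

noncomputable def sseq (n : ℕ) : ℝ :=
  16 ^ n * (n ! : ℝ) ^ 4 / (((2 * n)! : ℝ) ^ 2 * n)

noncomputable def tseq (n : ℕ) : ℝ :=
  sseq n * (1 - 1 / (8 * (n : ℝ))) ^ 2

lemma sseq_eq_W (n : ℕ) (hn : 1 ≤ n) :
    sseq n = Real.Wallis.W n * ((2 * n + 1) / n) := by
  have hn0 : (0:ℝ) < n := by exact_mod_cast hn
  rw [Real.Wallis.W_eq_factorial_ratio, sseq]
  have h16 : (2:ℝ) ^ (4 * n) = 16 ^ n := by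
    rw [pow_mul]; norm_num
  rw [h16]
  field_simp

lemma sseq_pos (n : ℕ) (hn : 1 ≤ n) : 0 < sseq n := by
  have hn0 : (0:ℝ) < n := by exact_mod_cast hn
  have h1 : (0:ℝ) < (n ! : ℝ) := by exact_mod_cast n.factorial_pos
  have h2 : (0:ℝ) < ((2*n)! : ℝ) := by exact_mod_cast (2*n).factorial_pos
  unfold sseq; positivity

lemma sseq_succ (n : ℕ) (hn : 1 ≤ n) :
    sseq (n + 1) = sseq n * (4 * n * (n + 1) / (2 * n + 1) ^ 2) := by
  have hn0 : (0:ℝ) < n := by exact_mod_cast hn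
  have h1 : (0:ℝ) < (n ! : ℝ) := by exact_mod_cast n.factorial_pos
  have h2 : (0:ℝ) < ((2*n)! : ℝ) := by exact_mod_cast (2*n).factorial_pos
  have hfac : ((n+1)! : ℝ) = (n + 1) * (n ! : ℝ) := by
    rw [Nat.factorial_succ]; push_cast; ring
  have hfac2 : ((2*(n+1))! : ℝ) = (2*n+2) * ((2*n+1) * ((2*n)! : ℝ)) := by
    have : 2 * (n+1) = (2*n+1) + 1 := by ring
    rw [this, Nat.factorial_succ, Nat.factorial_succ]; push_cast; ring
  unfold sseq
  rw [hfac, hfac2]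
  have h21 : (0:ℝ) < 2 * (n:ℝ) + 1 := by linarith
  field_simp
  push_cast; ring

lemma tseq_mono (n : ℕ) (hn : 1 ≤ n) : tseq n ≤ tseq (n + 1) := by
  have hn0 : (1:ℝ) ≤ n := by exact_mod_cast hn
  have hs := sseq_pos n hn
  unfold tseq
  rw [sseq_succ n hn]
  have key : (1 - 1 / (8 * (n:ℝ))) ^ 2 ≤
      (4 * n * (n + 1) / (2 * n + 1) ^ 2) * (1 - 1 / (8 * ((n:ℝ) + 1))) ^ 2 := by
    set x : ℝ := (n:ℝ) with hxdef
    have hx : (1:ℝ) ≤ x := hn0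
    have e1 : (1 - 1 / (8 * x)) = (8*x - 1)/(8*x) := by field_simp
    have e2 : (1 - 1 / (8 * (x+1))) = (8*x + 7)/(8*(x+1)) := by field_simp; ring
    rw [e1, e2, div_pow, div_pow]
    rw [show (4 * x * (x + 1) / (2 * x + 1) ^ 2 * ((8 * x + 7) ^ 2 / (8 * (x + 1)) ^ 2))
        = (4 * x * (x + 1) * (8 * x + 7) ^ 2) / ((2 * x + 1) ^ 2 * (8 * (x + 1)) ^ 2) by
      field_simp]
    rw [div_le_div_iff₀ (by positivity) (by positivity)]
    nlinarith [sq_nonneg x, sq_nonneg (x-1), sq_nonneg (x*(x-1)), sq_nonneg (x*x - 1)]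
  push_cast
  rw [mul_assoc]
  exact mul_le_mul_of_nonneg_left key hs.le

lemma tseq_tendsto : Tendsto tseq atTop (𝓝 π) := by
  have h1 : Tendsto (fun n : ℕ => (1:ℝ) / n) atTop (𝓝 0) :=
    tendsto_one_div_atTop_nhds_zero_nat
  have h8 : Tendsto (fun n : ℕ => (1:ℝ) / (8 * n)) atTop (𝓝 0) := by
    have h := h1.const_mul (1/8 : ℝ)
    rw [mul_zero] at h
    exact h.congr fun n => by rw [mul_comm (1/8 : ℝ), one_div_mul_one_div, mul_comm (n:ℝ)]
  have hW := Real.Wallis.tendsto_W_nhds_pi_div_two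
  have hmain : Tendsto (fun n : ℕ =>
      Real.Wallis.W n * ((2 * n + 1) / n) * (1 - 1 / (8 * (n : ℝ))) ^ 2)
      atTop (𝓝 (π/2 * 2 * 1)) := by
    apply Tendsto.mul
    apply Tendsto.mul hW
    · have h2 : Tendsto (fun n : ℕ => (2:ℝ) + 1/n) atTop (𝓝 2) := by
        simpa using Tendsto.add (tendsto_const_nhds (x := (2:ℝ)) (f := (atTop : Filter ℕ))) h1
      refine h2.congr' ?_
      filter_upwards [eventually_ge_atTop 1] with n hn
      have hn0 : (0:ℝ) < n := by exact_mod_cast hn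
      field_simp
    · simpa using (Tendsto.sub (tendsto_const_nhds (x := (1:ℝ)) (f := (atTop : Filter ℕ))) h8).pow 2
  have heq : π/2 * 2 * 1 = π := by ring
  rw [heq] at hmain
  apply hmain.congr'
  filter_upwards [eventually_ge_atTop 1] with n hn
  rw [tseq, sseq_eq_W n hn]

lemma tseq_le_pi (n : ℕ) (hn : 1 ≤ n) : tseq n ≤ π := by
  apply ge_of_tendsto tseq_tendsto
  filter_upwards [eventually_ge_atTop n] with m hm
  induction m, hm using Nat.le_induction with
  | base => exact le_rfl
  | succ m hnm ih => exact ih.trans (tseq_mono m (hn.trans hnm))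

lemma pi_le_sseq (n : ℕ) (hn : 1 ≤ n) : π * n ≤ sseq n * n := by
  have hn0 : (0:ℝ) < n := by exact_mod_cast hn
  have hW := Real.Wallis.le_W n
  rw [sseq_eq_W n hn]
  have hexp : Real.Wallis.W n * ((2 * ↑n + 1) / ↑n) * ↑n = Real.Wallis.W n * (2 * ↑n + 1) := by
    field_simp
  rw [hexp]
  have h2 : (0:ℝ) < 2 * (n:ℝ) + 2 := by linarith
  rw [div_mul_eq_mul_div, div_le_iff₀ h2] at hW
  nlinarith [Real.pi_pos]

/-- two-sided Stirling-type estimate for `n!·n!/(2n)!`: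
`√(πn)/4ⁿ ≤ n!n!/(2n)! ≤ √(πn)/(4ⁿ(1 - 1/(8n))) ≤ (3/2)·√(πn)/4ⁿ`. -/
theorem stmt19 (n : ℕ) (hn : 1 ≤ n) :
    Real.sqrt (Real.pi * n) / 4 ^ n
        ≤ (n.factorial * n.factorial : ℝ) / (2 * n).factorial ∧
      (n.factorial * n.factorial : ℝ) / (2 * n).factorial
        ≤ Real.sqrt (Real.pi * n) / (4 ^ n * (1 - 1 / (8 * (n : ℝ)))) ∧
      Real.sqrt (Real.pi * n) / (4 ^ n * (1 - 1 / (8 * (n : ℝ))))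
        ≤ 3 / 2 * (Real.sqrt (Real.pi * n) / 4 ^ n) := by
  have hn1 : (1:ℝ) ≤ n := by exact_mod_cast hn
  have hn0 : (0:ℝ) < n := by linarith
  have hf : (0:ℝ) < (n ! : ℝ) := by exact_mod_cast n.factorial_pos
  have hf2 : (0:ℝ) < ((2*n)! : ℝ) := by exact_mod_cast (2*n).factorial_pos
  set A : ℝ := (n.factorial * n.factorial : ℝ) / (2 * n).factorial with hAdef
  have hA : 0 < A := by positivity
  have h4 : (0:ℝ) < 4 ^ n := by positivity
  set r : ℝ := 1 - 1 / (8 * (n:ℝ)) with hrdef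
  have h18 : 1 / (8 * (n:ℝ)) ≤ 1/8 :=
    one_div_le_one_div_of_le (by norm_num) (by linarith)
  have hr : 0 < r := by rw [hrdef]; linarith
  have hAQ : (A * 4 ^ n) ^ 2 = sseq n * n := by
    rw [hAdef, sseq]
    have h16 : ((4:ℝ) ^ n) ^ 2 = 16 ^ n := by
      rw [← pow_mul, pow_mul']; norm_num
    field_simp
    exact h16
  have hlow2 : π * n ≤ (A * 4 ^ n) ^ 2 := by rw [hAQ]; exact pi_le_sseq n hn
  have hlow : Real.sqrt (π * n) ≤ A * 4 ^ n := by
    calc Real.sqrt (π * n) ≤ Real.sqrt ((A * 4 ^ n) ^ 2) := Real.sqrt_le_sqrt hlow2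
      _ = A * 4 ^ n := Real.sqrt_sq (by positivity)
  have hup2 : (A * 4 ^ n * r) ^ 2 ≤ π * n := by
    have : (A * 4 ^ n * r) ^ 2 = tseq n * n := by
      rw [tseq, ← hrdef, mul_pow, hAQ]; ring
    rw [this]
    exact mul_le_mul_of_nonneg_right (tseq_le_pi n hn) hn0.le
  have hup : A * 4 ^ n * r ≤ Real.sqrt (π * n) := by
    calc A * 4 ^ n * r = Real.sqrt ((A * 4 ^ n * r) ^ 2) :=
          (Real.sqrt_sq (by positivity)).symm
      _ ≤ Real.sqrt (π * n) := Real.sqrt_le_sqrt hup2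
  refine ⟨?_, ?_, ?_⟩
  · rw [div_le_iff₀ h4]; exact hlow
  · rw [le_div_iff₀ (by positivity), ← mul_assoc]; exact hup
  · have h1r : 1 / r ≤ 3 / 2 := by
      rw [div_le_iff₀ hr, hrdef]; linarith
    have heq : Real.sqrt (π * n) / (4 ^ n * r) = Real.sqrt (π * n) / 4 ^ n * (1 / r) := by
      field_simp
    rw [heq]
    calc Real.sqrt (π * n) / 4 ^ n * (1 / r)
        ≤ Real.sqrt (π * n) / 4 ^ n * (3 / 2) :=
          mul_le_mul_of_nonneg_left h1r (by positivity)
      _ = 3 / 2 * (Real.sqrt (π * n) / 4 ^ n) := by ring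
end
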